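/- Define the 12×12 matrix D̄ with entries in ℝ ∪ {+∞} by D̄_{ij} = g_{ij} − (5/12 + (i−j)/12) for 1 ≤ i, j ≤ 12, where, with n = 7i − j: g_{ij} = n/12 − (⌊n/5⌋ − 1)/4 if n ≥ 0 and n ≡ 1, 3 (mod 5), g_{ij} = n/12 − ⌊n/5⌋/4 if n ≥ 0 and n ≡ 0, 2, 4 (mod 5), and g_{ij} = +∞ if n < 0. For 12×12 matrices with entries in ℝ ∪ {+∞} define the min-plus product (D * D')_{ij} = min_{1≤k≤12} (D_{ik} + D'_{kj}). Then every entry of ((D̄ * D̄) * (D̄ * D̄)) is strictly positive. -/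

import Mathlib

/-!
STATEMENT 9: Define the 12×12 matrix `D̄` (entries in `ℝ ∪ {+∞}`, indices `1 ≤ i,j ≤ 12`)
by `D̄_{ij} = g_{ij} − (5/12 + (i−j)/12)`, with `g_{ij}` as in the analysis of
`y⁷ − y = x⁵ + c·x²` (see `g7` below; `g_{ij} = +∞` when `7i − j < 0`).  With the
min-plus product `(D * D')_{ij} = min_{1≤k≤12} (D_{ik} + D'_{kj})`, every entry of
`(D̄ * D̄) * (D̄ * D̄)` is strictly positive.
-/

open scoped BigOperators

/-- The lower bound `g_{ij}` for `ord_7 G_{7i−j}` for the polynomial `x⁵ + c·x²`. -/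
noncomputable def g7 (i j : ℕ) : WithTop ℝ :=
  let n : ℤ := 7 * i - j
  if n < 0 then ⊤
  else if n % 5 = 1 ∨ n % 5 = 3 then
    (((n : ℝ) / 12 - (((n / 5 : ℤ) : ℝ) - 1) / 4 : ℝ) : WithTop ℝ)
  else (((n : ℝ) / 12 - ((n / 5 : ℤ) : ℝ) / 4 : ℝ) : WithTop ℝ)

/-- The 12×12 truncated defect matrix `D̄` (index `i : Fin 12` stands for `i+1`). -/
noncomputable def Dbar7 (i j : Fin 12) : WithTop ℝ :=
  g7 (i + 1) (j + 1) +
    ((-(5 / 12 + (((i : ℕ) : ℝ) - ((j : ℕ) : ℝ)) / 12) : ℝ) : WithTop ℝ)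

/-- Min-plus (tropical) product of 12×12 matrices with entries in `ℝ ∪ {+∞}`. -/
noncomputable def minPlus12 (D D' : Fin 12 → Fin 12 → WithTop ℝ) :
    Fin 12 → Fin 12 → WithTop ℝ :=
  fun i j => Finset.univ.inf fun k => D i k + D' k j

/-- Integer-valued version of `Dbar7`, scaled by a factor `12`. -/
def ezD (i j : Fin 12) : WithTop ℤ :=
  let n : ℤ := 7 * ((i : ℕ) + 1) - ((j : ℕ) + 1)
  if n < 0 then ⊤
  else if n % 5 = 1 ∨ n % 5 = 3 then
    ((n - 3 * (n / 5) + 3 - (5 + ((i : ℕ) : ℤ) - ((j : ℕ) : ℤ)) : ℤ) : WithTop ℤ)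
  else ((n - 3 * (n / 5) - (5 + ((i : ℕ) : ℤ) - ((j : ℕ) : ℤ)) : ℤ) : WithTop ℤ)

/-- Min-plus product over `WithTop ℤ`. -/
def minPlusZ (D D' : Fin 12 → Fin 12 → WithTop ℤ) : Fin 12 → Fin 12 → WithTop ℤ :=
  fun i j => Finset.univ.inf fun k => D i k + D' k j

/-- The order embedding `WithTop ℤ → WithTop ℝ`, `z ↦ z / 12`. -/
noncomputable def hz : WithTop ℤ → WithTop ℝ := WithTop.map (fun z : ℤ => (z : ℝ) / 12)

lemma hz_strictMono : StrictMono hz :=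
  WithTop.strictMono_map_iff.2 (fun a b h => by
    have : (a : ℝ) < b := by exact_mod_cast h
    linarith)

lemma hz_top : hz ⊤ = ⊤ := rfl

lemma hz_coe (z : ℤ) : hz z = (((z : ℝ) / 12 : ℝ) : WithTop ℝ) := rfl

lemma hz_add (a b : WithTop ℤ) : hz (a + b) = hz a + hz b := by
  cases a with
  | top => simp [hz_top, hz]
  | coe a =>
    cases b with
    | top => simp [hz_top, hz]
    | coe b =>
      show hz ((a + b : ℤ) : WithTop ℤ) = _
      rw [hz_coe, hz_coe, hz_coe, ← WithTop.coe_add, WithTop.coe_eq_coe]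
      push_cast; ring

lemma hz_min (a b : WithTop ℤ) : hz (a ⊓ b) = hz a ⊓ hz b := by
  exact hz_strictMono.monotone.map_min

lemma hz_inf (s : Finset (Fin 12)) (f : Fin 12 → WithTop ℤ) :
    hz (s.inf f) = s.inf (fun k => hz (f k)) := by
  induction s using Finset.induction with
  | empty => simp [hz_top]
  | insert a s h ih => rw [Finset.inf_insert, Finset.inf_insert, hz_min, ih]

lemma hz_pos (w : WithTop ℤ) (h : 0 < w) : 0 < hz w := by
  cases w with
  | top => simp [hz_top]
  | coe z =>
    rw [hz_coe]
    have hz0 : 0 < z := by exact_mod_cast h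
    have : (0:ℝ) < (z:ℝ)/12 := by positivity
    exact_mod_cast this

lemma Dbar7_eq (i j : Fin 12) : Dbar7 i j = hz (ezD i j) := by
  unfold Dbar7 g7 ezD
  simp only [Nat.cast_add, Nat.cast_one]
  split_ifs with h1 h2
  · simp [hz_top]
  · rw [hz_coe, ← WithTop.coe_add, WithTop.coe_eq_coe]
    push_cast; ring
  · rw [hz_coe, ← WithTop.coe_add, WithTop.coe_eq_coe]
    push_cast; ring

lemma minPlus_eq (E E' : Fin 12 → Fin 12 → WithTop ℤ) :
    minPlus12 (fun a b => hz (E a b)) (fun a b => hz (E' a b)) =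
      fun i j => hz (minPlusZ E E' i j) := by
  funext i j
  unfold minPlus12 minPlusZ
  rw [hz_inf]
  exact Finset.inf_congr rfl (fun k _ => (hz_add _ _).symm)

set_option maxRecDepth 10000 in
lemma zpos : ∀ i j : Fin 12,
    (0 : WithTop ℤ) < minPlusZ (minPlusZ ezD ezD) (minPlusZ ezD ezD) i j := by decide

theorem Dbar7_fourth_minplus_power_pos :
    ∀ i j : Fin 12,
      (0 : WithTop ℝ) < minPlus12 (minPlus12 Dbar7 Dbar7) (minPlus12 Dbar7 Dbar7) i j := by
  intro i j
  have hD : Dbar7 = fun a b => hz (ezD a b) := funext fun a => funext fun b => Dbar7_eq a b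
  rw [hD, minPlus_eq, minPlus_eq]
  exact hz_pos _ (zpos i j)
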